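/- Let λ = (k, −l) ∈ ℤ². The W-orbit of λ satisfies Wλ ∩ (P⁺ ∪ −P⁺) = ∅ if and only if either p(m) > 0 for all m ∈ ℤ or p(m) < 0 for all m ∈ ℤ. -/

import Mathlib

/-- Simple reflection `r1 : (x, y) ↦ (-x, y + b x)` on the weight lattice `ℤ × ℤ`. -/
def r1 (b : ℤ) : Equiv.Perm (ℤ × ℤ) :=
  Function.Involutive.toPerm (fun v => (-v.1, v.2 + b * v.1))
    (fun v => by simp [Prod.ext_iff])

/-- Simple reflection `r2 : (x, y) ↦ (x + a y, -y)` on the weight lattice `ℤ × ℤ`. -/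
def r2 (a : ℤ) : Equiv.Perm (ℤ × ℤ) :=
  Function.Involutive.toPerm (fun v => (v.1 + a * v.2, -v.2))
    (fun v => by simp [Prod.ext_iff])

/-- The Weyl group `W`, the group of bijections of `ℤ × ℤ` generated by `r1` and `r2`. -/
def W (a b : ℤ) : Subgroup (Equiv.Perm (ℤ × ℤ)) :=
  Subgroup.closure {r1 b, r2 a}

/-- The `W`-orbit of a point `v ∈ ℤ × ℤ`. -/
def Worbit (a b : ℤ) (v : ℤ × ℤ) : Set (ℤ × ℤ) :=
  {w : ℤ × ℤ | ∃ g ∈ W a b, g v = w}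

/-- The set of dominant integral weights `P⁺`. -/
def Pplus : Set (ℤ × ℤ) := {v : ℤ × ℤ | 0 ≤ v.1 ∧ 0 ≤ v.2}

/-- The set of antidominant integral weights `-P⁺`. -/
def Pminus : Set (ℤ × ℤ) := {v : ℤ × ℤ | v.1 ≤ 0 ∧ v.2 ≤ 0}


/-- `pSeq a b k l p` says that `p : ℤ → ℤ` is the (unique) sequence with `p 0 = l`,
`p 1 = k`, and `p (m+2) = b * p (m+1) - p m` for even `m`,
`p (m+2) = a * p (m+1) - p m` for odd `m`. -/
def pSeq (a b k l : ℤ) (p : ℤ → ℤ) : Prop :=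
  p 0 = l ∧ p 1 = k ∧
    ∀ m : ℤ, p (m + 2) = (if Even m then b else a) * p (m + 1) - p m

/-!
Writing `(k, -l) = (p 1, -p 0)`, the recurrence for `p` makes the simple reflections walk along
the weights `(p (2m+1), -p (2m))` and `(-p (2m+1), p (2m+2))`: `r1` swaps the two weights with
index `m`, and `r2` sends the second one to the first one with index `m + 1`. So these weights
form exactly the orbit of `(k, -l)`. Their entries are consecutive values `p n, p (n+1)` up to
sign, and such a weight avoids `P⁺ ∪ -P⁺` iff `p n * p (n+1) > 0`. That holds for every `n`
iff `p` has constant strict sign.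
-/

section Reflections

variable {a b : ℤ}

lemma r1_apply (v : ℤ × ℤ) : r1 b v = (-v.1, v.2 + b * v.1) := rfl

lemma r2_apply (v : ℤ × ℤ) : r2 a v = (v.1 + a * v.2, -v.2) := rfl

lemma r1_involutive : Function.Involutive (r1 b) := (r1 b).apply_symm_apply

lemma r2_involutive : Function.Involutive (r2 a) := (r2 a).apply_symm_apply

lemma r1_mem_W : r1 b ∈ W a b := Subgroup.subset_closure (Set.mem_insert _ _)

lemma r2_mem_W : r2 a ∈ W a b := Subgroup.subset_closure (Set.mem_insert_of_mem _ rfl)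

lemma W_mapsTo {S : Set (ℤ × ℤ)} (h1 : Set.MapsTo (r1 b) S S) (h2 : Set.MapsTo (r2 a) S S)
    {g : Equiv.Perm (ℤ × ℤ)} (hg : g ∈ W a b) : Set.MapsTo g S S := by
  induction hg using Subgroup.closure_induction'' with
  -- `(r1 b)⁻¹` and `(r2 a)⁻¹` are `r1 b` and `r2 a` by definition.
  | mem g hg | inv_mem g hg => rcases hg with rfl | rfl <;> assumption
  | one => exact Set.mapsTo_id S
  | mul g g' _ _ hg hg' => exact hg.comp hg'

lemma apply_mem_Worbit {g : Equiv.Perm (ℤ × ℤ)} (hg : g ∈ W a b) {v w : ℤ × ℤ}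
    (hw : w ∈ Worbit a b v) : g w ∈ Worbit a b v := by
  obtain ⟨h, hh, rfl⟩ := hw
  exact ⟨g * h, mul_mem hg hh, rfl⟩

end Reflections

def evenWeight (p : ℤ → ℤ) (m : ℤ) : ℤ × ℤ := (p (2 * m + 1), -p (2 * m))

def oddWeight (p : ℤ → ℤ) (m : ℤ) : ℤ × ℤ := (-p (2 * m + 1), p (2 * m + 2))

def weights (p : ℤ → ℤ) : Set (ℤ × ℤ) := Set.range (evenWeight p) ∪ Set.range (oddWeight p)

section Orbit

variable {a b : ℤ} {p : ℤ → ℤ}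
  (hrec : ∀ m : ℤ, p (m + 2) = (if Even m then b else a) * p (m + 1) - p m)
include hrec

lemma even_step (m : ℤ) : p (2 * m + 2) = b * p (2 * m + 1) - p (2 * m) := by
  simpa using hrec (2 * m)

lemma odd_step (m : ℤ) : p (2 * m + 3) = a * p (2 * m + 2) - p (2 * m + 1) := by
  have h := hrec (2 * m + 1)
  rw [if_neg (by simp)] at h
  rw [show 2 * m + 3 = 2 * m + 1 + 2 by ring, h]
  ring_nf

lemma r1_evenWeight (m : ℤ) : r1 b (evenWeight p m) = oddWeight p m := by
  simp only [r1_apply, evenWeight, oddWeight, even_step hrec m]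
  ring_nf

lemma r1_oddWeight (m : ℤ) : r1 b (oddWeight p m) = evenWeight p m := by
  rw [r1_involutive.eq_iff, r1_evenWeight hrec]

lemma r2_oddWeight (m : ℤ) : r2 a (oddWeight p m) = evenWeight p (m + 1) := by
  simp only [r2_apply, evenWeight, oddWeight, show 2 * (m + 1) = 2 * m + 2 by ring,
    show 2 * m + 2 + 1 = 2 * m + 3 by ring, odd_step hrec m]
  ring_nf

lemma r2_evenWeight_add_one (m : ℤ) : r2 a (evenWeight p (m + 1)) = oddWeight p m := by
  rw [r2_involutive.eq_iff, r2_oddWeight hrec]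

lemma Worbit_evenWeight_subset : Worbit a b (evenWeight p 0) ⊆ weights p := by
  have h1 : Set.MapsTo (r1 b) (weights p) (weights p) := by
    rintro _ (⟨m, rfl⟩ | ⟨m, rfl⟩)
    · exact Or.inr ⟨m, (r1_evenWeight hrec m).symm⟩
    · exact Or.inl ⟨m, (r1_oddWeight hrec m).symm⟩
  have h2 : Set.MapsTo (r2 a) (weights p) (weights p) := by
    rintro _ (⟨m, rfl⟩ | ⟨m, rfl⟩)
    · refine Or.inr ⟨m - 1, ?_⟩
      rw [← r2_evenWeight_add_one hrec, sub_add_cancel]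
    · exact Or.inl ⟨m + 1, (r2_oddWeight hrec m).symm⟩
  rintro _ ⟨g, hg, rfl⟩
  exact W_mapsTo h1 h2 hg (Or.inl ⟨0, rfl⟩)

lemma evenWeight_mem_Worbit (m : ℤ) : evenWeight p m ∈ Worbit a b (evenWeight p 0) := by
  induction m using Int.induction_on with
  | zero => exact ⟨1, one_mem _, rfl⟩
  | succ m ih =>
    rw [← r2_oddWeight hrec, ← r1_evenWeight hrec]
    exact apply_mem_Worbit r2_mem_W (apply_mem_Worbit r1_mem_W ih)
  | pred m ih =>
    have h := apply_mem_Worbit r1_mem_W (apply_mem_Worbit (r2_mem_W (a := a)) ih)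
    rwa [← sub_add_cancel (-(m : ℤ)) 1, r2_evenWeight_add_one hrec, r1_oddWeight hrec] at h

lemma Worbit_evenWeight_zero : Worbit a b (evenWeight p 0) = weights p := by
  refine (Worbit_evenWeight_subset hrec).antisymm ?_
  rintro _ (⟨m, rfl⟩ | ⟨m, rfl⟩)
  · exact evenWeight_mem_Worbit hrec m
  · rw [← r1_evenWeight hrec]
    exact apply_mem_Worbit r1_mem_W (evenWeight_mem_Worbit hrec m)

end Orbit

lemma mk_neg_notMem_Pplus_union_Pminus_iff {x y : ℤ} :
    (x, -y) ∉ Pplus ∪ Pminus ↔ 0 < x * y := by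
  simp only [Pplus, Pminus, Set.mem_union, Set.mem_ofPred_eq, mul_pos_iff]
  omega

lemma neg_mk_notMem_Pplus_union_Pminus_iff {x y : ℤ} :
    (-x, y) ∉ Pplus ∪ Pminus ↔ 0 < x * y := by
  simp only [Pplus, Pminus, Set.mem_union, Set.mem_ofPred_eq, mul_pos_iff]
  omega

lemma weights_inter_eq_empty_iff {p : ℤ → ℤ} :
    weights p ∩ (Pplus ∪ Pminus) = ∅ ↔ ∀ n, 0 < p n * p (n + 1) := by
  rw [← Set.disjoint_iff_inter_eq_empty, weights, Set.disjoint_union_left, Set.disjoint_left,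
    Set.disjoint_left, Set.forall_mem_range, Set.forall_mem_range]
  simp only [evenWeight, oddWeight, mk_neg_notMem_Pplus_union_Pminus_iff,
    neg_mk_notMem_Pplus_union_Pminus_iff]
  constructor
  · rintro ⟨heven, hodd⟩ n
    obtain ⟨m, rfl | rfl⟩ := Int.even_or_odd' n
    · rw [mul_comm]
      exact heven m
    · rw [add_assoc]
      exact hodd m
  · intro h
    exact ⟨fun m => mul_comm (p (2 * m)) _ ▸ h (2 * m),
      fun m => add_assoc (2 * m) 1 1 ▸ h (2 * m + 1)⟩

section Sign

variable {R : Type*} [Ring R] [LinearOrder R] [IsStrictOrderedRing R] {p : ℤ → R}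

lemma pos_iff_pos_zero_of_mul_succ_pos (h : ∀ n, 0 < p n * p (n + 1)) (n : ℤ) :
    0 < p n ↔ 0 < p 0 := by
  induction n using Int.induction_on with
  | zero => rfl
  | succ n ih => exact (pos_iff_pos_of_mul_pos (h n)).symm.trans ih
  | pred n ih =>
    have := h (-n - 1)
    rw [sub_add_cancel] at this
    exact (pos_iff_pos_of_mul_pos this).trans ih

lemma forall_mul_succ_pos_iff :
    (∀ n, 0 < p n * p (n + 1)) ↔ (∀ n, 0 < p n) ∨ (∀ n, p n < 0) := by
  constructor
  · intro h
    have hne (n : ℤ) : p n ≠ 0 := left_ne_zero_of_mul (h n).ne'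
    rcases (hne 0).lt_or_gt with h0 | h0
    · exact Or.inr fun n => ((hne n).lt_or_gt.resolve_right
        fun hn => h0.not_gt ((pos_iff_pos_zero_of_mul_succ_pos h n).1 hn))
    · exact Or.inl fun n => (pos_iff_pos_zero_of_mul_succ_pos h n).2 h0
  · rintro (h | h) n
    · exact mul_pos (h n) (h (n + 1))
    · exact mul_pos_of_neg_of_neg (h n) (h (n + 1))

end Sign

theorem orbit_avoids_dominant_iff_p_pos_or_neg_general (a b : ℤ)
    (k l : ℤ) (p : ℤ → ℤ) (hp : pSeq a b k l p) :
    Worbit a b (k, -l) ∩ (Pplus ∪ Pminus) = ∅ ↔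
      (∀ m : ℤ, 0 < p m) ∨ (∀ m : ℤ, p m < 0) := by
  obtain ⟨hp0, hp1, hrec⟩ := hp
  have h0 : ((k, -l) : ℤ × ℤ) = evenWeight p 0 := by simp [evenWeight, hp0, hp1]
  rw [h0, Worbit_evenWeight_zero hrec, weights_inter_eq_empty_iff, forall_mul_succ_pos_iff]

theorem orbit_avoids_dominant_iff_p_pos_or_neg (a b : ℤ) (ha : 2 ≤ a) (hb : 2 ≤ b)
    (hab : 4 < a * b) (k l : ℤ) (p : ℤ → ℤ) (hp : pSeq a b k l p) :
    Worbit a b (k, -l) ∩ (Pplus ∪ Pminus) = ∅ ↔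
      (∀ m : ℤ, 0 < p m) ∨ (∀ m : ℤ, p m < 0) :=
  orbit_avoids_dominant_iff_p_pos_or_neg_general a b k l p hp
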